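/- arXiv:math/0606426 — 6 statements merged into one kernel-verified Lean document; each statement's English description precedes it below -/
import Mathlib

section
/- Let S be a convex set in ℝⁿ whose interior contains the origin, and suppose there exists a point x on the boundary of S at minimum L¹-distance d > 0 from the origin (i.e., d = Σᵢ|xᵢ| is minimal over all boundary points). Then there exists a boundary point of S with exactly one nonzero component whose L¹-distance to the origin equals d. -/
/-!
Every point of L¹-norm `< d` lies in `S`: otherwise the segment from `0` to it would cross
`frontier S` at a point of L¹-norm `< d`. Hence the open L¹-ball of radius `d` lies in the
interior of `S`, and its closure, which contains the `2n` vertices `± d • eᵢ`, in the closure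
of `S`. These vertices cannot all lie in the convex set `interior S`, since their convex hull
contains the boundary point `x`; a vertex outside `interior S` is the required point.
-/

open Set

theorem IsPreconnected.inter_frontier_nonempty {X : Type*} [TopologicalSpace X] {s t : Set X}
    (hs : IsPreconnected s) (hst : (s ∩ t).Nonempty) (hst' : (s \ t).Nonempty) :
    (s ∩ frontier t).Nonempty := by
  by_contra h
  have hcover : s ⊆ interior t ∪ (closure t)ᶜ := fun z hz => by
    by_cases hzt : z ∈ interior t
    · exact Or.inl hzt
    · exact Or.inr fun hzc => h ⟨z, hz, hzc, hzt⟩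
  obtain ⟨a, has, hat⟩ := hst
  obtain ⟨b, hbs, hbt⟩ := hst'
  obtain ⟨z, -, hzi, hzc⟩ := hs _ _ isOpen_interior isClosed_closure.isOpen_compl hcover
    ⟨a, has, (hcover has).resolve_right (not_not.2 (subset_closure hat))⟩
    ⟨b, hbs, (hcover hbs).resolve_left fun hbi => hbt (interior_subset hbi)⟩
  exact hzc (subset_closure (interior_subset hzi))

theorem StarConvex.subset_of_disjoint_frontier {E : Type*} [AddCommGroup E] [Module ℝ E]
    [TopologicalSpace E] [IsTopologicalAddGroup E] [ContinuousSMul ℝ E] {x : E} {B S : Set E}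
    (hB : StarConvex ℝ x B) (hxS : x ∈ S) (hBS : Disjoint B (frontier S)) : B ⊆ S := by
  intro y hy
  by_contra hyS
  obtain ⟨z, hz, hzS⟩ := (convex_segment x y).isPreconnected.inter_frontier_nonempty
    ⟨x, left_mem_segment ℝ x y, hxS⟩ ⟨y, right_mem_segment ℝ x y, hyS⟩
  exact hBS.ne_of_mem (hB.segment_subset hy hz) hzS rfl

theorem existsUnique_single_ne_zero {ι : Type*} [DecidableEq ι] (i : ι) {c : ℝ} (hc : c ≠ 0) :
    ∃! j, (Pi.single i c : ι → ℝ) j ≠ 0 :=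
  ⟨i, by simpa using hc, fun j hj => by_contra fun hji => hj (by simp [hji])⟩

section L1

variable {ι : Type*} [Fintype ι]

theorem sum_abs_smul (t : ℝ) (y : ι → ℝ) : ∑ i, |(t • y) i| = |t| * ∑ i, |y i| := by
  simp only [Pi.smul_apply, smul_eq_mul, abs_mul, Finset.mul_sum]

theorem sum_abs_single [DecidableEq ι] (i : ι) (c : ℝ) : ∑ j, |Pi.single i c j| = |c| := by
  rw [Fintype.sum_eq_single i fun j hji => by rw [Pi.single_eq_of_ne hji, abs_zero],
    Pi.single_eq_same]

theorem starConvex_setOf_sum_abs_lt (d : ℝ) : StarConvex ℝ 0 {y : ι → ℝ | ∑ i, |y i| < d} := by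
  refine starConvex_zero_iff.2 fun y hy t ht0 ht1 => ?_
  have hy0 : 0 ≤ ∑ i, |y i| := by positivity
  simp only [mem_ofPred_eq, sum_abs_smul, abs_of_nonneg ht0] at hy ⊢
  nlinarith

theorem isOpen_setOf_sum_abs_lt (d : ℝ) : IsOpen {y : ι → ℝ | ∑ i, |y i| < d} :=
  isOpen_lt (by fun_prop) continuous_const

theorem setOf_sum_abs_lt_subset_interior {S : Set (ι → ℝ)} (h0 : (0 : ι → ℝ) ∈ S) {d : ℝ}
    (hmin : ∀ y ∈ frontier S, d ≤ ∑ i, |y i|) : {y | ∑ i, |y i| < d} ⊆ interior S :=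
  interior_maximal ((starConvex_setOf_sum_abs_lt d).subset_of_disjoint_frontier h0
    (disjoint_left.2 fun y hy hyS => (hmin y hyS).not_gt hy)) (isOpen_setOf_sum_abs_lt d)

theorem mem_closure_of_sum_abs_eq {T : Set (ι → ℝ)} {d : ℝ} (hd : 0 < d)
    (hT : {y | ∑ i, |y i| < d} ⊆ T) {v : ι → ℝ} (hv : ∑ i, |v i| = d) : v ∈ closure T := by
  have hseg : openSegment ℝ 0 v ⊆ T := by
    rintro _ ⟨a, b, ha, hb, hab, rfl⟩
    apply hT
    simp only [mem_ofPred_eq, smul_zero, zero_add, sum_abs_smul, abs_of_pos hb, hv]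
    nlinarith
  have hcl := closure_mono hseg
  rw [closure_openSegment] at hcl
  exact hcl (right_mem_segment ℝ 0 v)

theorem Convex.mem_of_sum_abs_eq [DecidableEq ι] {C : Set (ι → ℝ)} (hC : Convex ℝ C) {d : ℝ}
    (hd : 0 < d) (hvert : ∀ i, Pi.single i d ∈ C ∧ Pi.single i (-d) ∈ C) {x : ι → ℝ}
    (hx : ∑ i, |x i| = d) : x ∈ C := by
  set ε : ι → ℝ := fun i => if 0 ≤ x i then d else -d
  have hcoord : ∀ i, |x i| / d * ε i = x i := fun i => by
    by_cases h : 0 ≤ x i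
    · simp only [ε, if_pos h, abs_of_nonneg h]; field_simp
    · simp only [ε, if_neg h, abs_of_neg (not_le.1 h)]; field_simp
  have hmem := hC.sum_mem (t := Finset.univ) (w := fun i => |x i| / d)
    (z := fun i => Pi.single i (ε i)) (fun i _ => by positivity)
    (by rw [← Finset.sum_div, hx, div_self hd.ne'])
    (fun i _ => by by_cases h : 0 ≤ x i <;> simp [ε, h, hvert i])
  simpa only [← Pi.single_smul', smul_eq_mul, hcoord, Finset.univ_sum_single] using hmem

end L1

/-- Minimum L¹-distance projection onto the boundary of a convex set is achieved
by a point with exactly one nonzero component. -/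
theorem min_L1_projection_unidimensional {n : ℕ} (S : Set (Fin n → ℝ))
    (hS : Convex ℝ S) (h0 : (0 : Fin n → ℝ) ∈ interior S)
    (d : ℝ) (hd : 0 < d)
    (x : Fin n → ℝ) (hx : x ∈ frontier S) (hxd : ∑ i, |x i| = d)
    (hmin : ∀ y ∈ frontier S, d ≤ ∑ i, |y i|) :
    ∃ z ∈ frontier S, (∃! i, z i ≠ 0) ∧ ∑ i, |z i| = d := by
  have hball := setOf_sum_abs_lt_subset_interior (interior_subset h0) hmin
  obtain ⟨i, c, hc, hci⟩ : ∃ i, ∃ c, |c| = d ∧ Pi.single i c ∉ interior S := by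
    by_contra! hvert
    exact hx.2 (hS.interior.mem_of_sum_abs_eq hd
      (fun i => ⟨hvert i d (abs_of_pos hd), hvert i (-d) (by rw [abs_neg, abs_of_pos hd])⟩) hxd)
  have hnorm : ∑ j, |Pi.single i c j| = d := (sum_abs_single i c).trans hc
  refine ⟨Pi.single i c, ⟨mem_closure_of_sum_abs_eq hd (hball.trans interior_subset) hnorm, hci⟩,
    existsUnique_single_ne_zero i (abs_pos.1 (hc ▸ hd)), hnorm⟩
end

section
/- Let S be a convex set in ℝⁿ and a an interior point of S. If d is the minimum L¹-distance from a to the boundary ∂S (assumed attained and positive), then there exists x ∈ ∂S with Σᵢ|xᵢ - aᵢ| = d such that x differs from a in exactly one coordinate. -/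
/-!
The open L¹ ball of radius `d` about `a` lies in `interior S`: the segment from `a` to a point
outside `interior S` crosses `frontier S`, at distance less than `d` from `a`. Hence the whole
closed ball lies in `closure S`. A point `x₀` of the L¹ sphere is a convex combination, with weights
`|x₀ i - a i| / d`, of the axis vertices `a ± d • eᵢ` on its side; as `interior S` is convex and
misses `x₀`, it misses one of these vertices, which is therefore a frontier point of the required
kind.
-/

open Set

theorem IsPreconnected.inter_frontier_nonempty_of_not_subset_interior {X : Type*}
    [TopologicalSpace X] {s t : Set X} (hs : IsPreconnected s) (hst : (s ∩ interior t).Nonempty)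
    (hs_not : ¬s ⊆ interior t) : (s ∩ frontier t).Nonempty := by
  by_contra h
  refine hs_not (hs.subset_left_of_subset_union isOpen_interior isClosed_closure.isOpen_compl
    (disjoint_compl_right.mono_left interior_subset_closure) (fun x hx => ?_) hst)
  by_contra hx'
  simp only [mem_union, mem_compl_iff, not_or, not_not] at hx'
  exact h ⟨x, hx, hx'.2, hx'.1⟩

section L1

variable {ι : Type*}

theorem existsUnique_add_single_ne [DecidableEq ι] (a : ι → ℝ) (i : ι) {r : ℝ} (hr : r ≠ 0) :
    ∃! j, (a + Pi.single i r : ι → ℝ) j ≠ a j :=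
  ⟨i, by simpa using hr, fun j hj => by_contra fun hji => hj (by simp [hji])⟩

variable [Fintype ι]

theorem sum_abs_add_smul_sub (a y : ι → ℝ) (t : ℝ) :
    ∑ i, |(a + t • (y - a)) i - a i| = |t| * ∑ i, |y i - a i| := by
  simp [abs_mul, Finset.mul_sum]

theorem mem_interior_of_sum_abs_sub_lt {S : Set (ι → ℝ)} {a y : ι → ℝ} {d : ℝ}
    (ha : a ∈ interior S) (hmin : ∀ z ∈ frontier S, d ≤ ∑ i, |z i - a i|)
    (hy : ∑ i, |y i - a i| < d) : y ∈ interior S := by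
  by_contra hyS
  obtain ⟨z, hz, hz_fr⟩ := (convex_segment a y).isPreconnected
    |>.inter_frontier_nonempty_of_not_subset_interior ⟨a, left_mem_segment ℝ a y, ha⟩
      fun h => hyS (h (right_mem_segment ℝ a y))
  rw [segment_eq_image'] at hz
  obtain ⟨t, ⟨ht0, ht1⟩, rfl⟩ := hz
  have hdz := hmin _ hz_fr
  rw [sum_abs_add_smul_sub, abs_of_nonneg ht0] at hdz
  nlinarith [Finset.sum_nonneg fun i (_ : i ∈ Finset.univ) => abs_nonneg (y i - a i)]

theorem mem_closure_of_sum_abs_sub_le {S : Set (ι → ℝ)} {a y : ι → ℝ} {d : ℝ} (hd : 0 < d)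
    (hball : ∀ z, ∑ i, |z i - a i| < d → z ∈ S) (hy : ∑ i, |y i - a i| ≤ d) :
    y ∈ closure S := by
  have hseg : openSegment ℝ a y ⊆ S := by
    rw [openSegment_eq_image']
    rintro _ ⟨t, ⟨ht0, ht1⟩, rfl⟩
    apply hball
    rw [sum_abs_add_smul_sub, abs_of_pos ht0]
    nlinarith
  exact closure_mono hseg (segment_subset_closure_openSegment (right_mem_segment ℝ a y))

theorem sum_filter_abs_sub_div {a x : ι → ℝ} {d : ℝ} (hd : 0 < d) (hx : ∑ i, |x i - a i| = d) :
    ∑ i with x i ≠ a i, |x i - a i| / d = 1 := by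
  rw [Finset.sum_filter_of_ne (p := fun i => x i ≠ a i) fun i _ h hxa => h (by simp [hxa]),
    ← Finset.sum_div, hx, div_self hd.ne']

variable [DecidableEq ι]

theorem sum_abs_add_single_sub (a : ι → ℝ) (i : ι) (r : ℝ) :
    ∑ j, |(a + Pi.single i r : ι → ℝ) j - a j| = |r| := by
  simp [Pi.single_apply, abs_ite]

theorem sum_filter_smul_add_single {a x : ι → ℝ} {d : ℝ} (hd : 0 < d)
    (hx : ∑ i, |x i - a i| = d) :
    ∑ i with x i ≠ a i, (|x i - a i| / d) • (a + Pi.single i (d / |x i - a i| * (x i - a i))) =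
      x := by
  have hterm : ∀ i ∈ ({i | x i ≠ a i} : Finset ι),
      (|x i - a i| / d) • (a + Pi.single i (d / |x i - a i| * (x i - a i))) =
        (|x i - a i| / d) • a + Pi.single i (x i - a i) := by
    intro i hi
    have hc : |x i - a i| ≠ 0 := abs_ne_zero.2 (sub_ne_zero.2 (Finset.mem_filter.1 hi).2)
    rw [smul_add, ← Pi.single_smul', smul_eq_mul]
    congr 2
    field_simp
  rw [Finset.sum_congr rfl hterm, Finset.sum_add_distrib, ← Finset.sum_smul,
    sum_filter_abs_sub_div hd hx, one_smul,
    Finset.sum_filter_of_ne (p := fun i => x i ≠ a i) fun i _ h hxa => h (by simp [hxa]),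
    Finset.univ_sum_single]
  exact add_sub_cancel a x

theorem Convex.exists_add_single_notMem {T : Set (ι → ℝ)} (hT : Convex ℝ T) {a x : ι → ℝ}
    {d : ℝ} (hd : 0 < d) (hx : ∑ i, |x i - a i| = d) (hxT : x ∉ T) :
    ∃ i r, |r| = d ∧ a + Pi.single i r ∉ T := by
  by_contra! h
  refine hxT (sum_filter_smul_add_single hd hx ▸ hT.sum_mem (fun i _ => by positivity)
    (sum_filter_abs_sub_div hd hx) fun i hi => h _ _ ?_)
  have hc : |x i - a i| ≠ 0 := abs_ne_zero.2 (sub_ne_zero.2 (Finset.mem_filter.1 hi).2)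
  rw [abs_mul, abs_div, abs_abs, abs_of_pos hd]
  field_simp

end L1

/-- Corollary: minimum L¹-distance from an interior point `a` to the boundary is
achieved by a boundary point differing from `a` in exactly one coordinate. -/
theorem min_L1_projection_from_point {n : ℕ} (S : Set (Fin n → ℝ))
    (hS : Convex ℝ S) (a : Fin n → ℝ) (ha : a ∈ interior S)
    (d : ℝ) (hd : 0 < d)
    (x₀ : Fin n → ℝ) (hx₀ : x₀ ∈ frontier S) (hx₀d : ∑ i, |x₀ i - a i| = d)
    (hmin : ∀ y ∈ frontier S, d ≤ ∑ i, |y i - a i|) :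
    ∃ x ∈ frontier S, (∑ i, |x i - a i| = d) ∧ (∃! i, x i ≠ a i) := by
  obtain ⟨i, r, hr, hv⟩ := hS.interior.exists_add_single_notMem hd hx₀d hx₀.2
  have hvd : ∑ j, |(a + Pi.single i r : Fin n → ℝ) j - a j| = d := by
    rw [sum_abs_add_single_sub, hr]
  have hball : ∀ z, ∑ j, |z j - a j| < d → z ∈ S := fun z hz =>
    interior_subset (mem_interior_of_sum_abs_sub_lt ha hmin hz)
  have hr0 : r ≠ 0 := by
    rintro rfl
    simp [← hr] at hd
  exact ⟨_, ⟨mem_closure_of_sum_abs_sub_le hd hball hvd.le, hv⟩, hvd,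
    existsUnique_add_single_ne a i hr0⟩
end

section
/- Let S be a convex set in ℝⁿ with 0 in its interior, and fix 0 < p ≤ 1. If the minimum of the Lᵖ-distance (Σᵢ|xᵢ|ᵖ)^(1/p) from the origin over boundary points x ∈ ∂S is attained with value d > 0, then there is a boundary point of S with exactly one nonzero component at Lᵖ-distance d from the origin. -/
open Finset

private lemma exists_smul_mem_frontier' {n : ℕ} {S : Set (Fin n → ℝ)}
    (h0 : (0 : Fin n → ℝ) ∈ interior S) {y : Fin n → ℝ} (hy : y ∉ interior S) :
    ∃ t : ℝ, 0 < t ∧ t ≤ 1 ∧ t • y ∈ frontier S := by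
  by_cases hyc : y ∈ closure S
  · exact ⟨1, one_pos, le_refl 1, by rw [one_smul]; exact ⟨hyc, hy⟩⟩
  · by_contra hno
    push_neg at hno
    have hnofr : ∀ w ∈ segment ℝ (0 : Fin n → ℝ) y, w ∉ frontier S := by
      intro w hw hwf
      rw [segment_eq_image] at hw
      obtain ⟨t, ht, rfl⟩ := hw
      simp only [smul_zero, zero_add] at hwf ⊢
      rcases eq_or_lt_of_le ht.1 with h0t | h0t
      · rw [← h0t, zero_smul] at hwf
        exact hwf.2 h0
      · exact (hno t h0t ht.2).elim (by simpa using hwf)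
    have hconn : IsPreconnected (segment ℝ (0 : Fin n → ℝ) y) :=
      (convex_segment _ _).isPreconnected
    have hsub : segment ℝ (0 : Fin n → ℝ) y ⊆ interior S ∪ (closure S)ᶜ := by
      intro w hw
      by_cases hwi : w ∈ interior S
      · exact Or.inl hwi
      · refine Or.inr fun hwc => hnofr w hw ⟨hwc, hwi⟩
    obtain ⟨w, hw⟩ := hconn (interior S) (closure S)ᶜ isOpen_interior
      (isClosed_closure.isOpen_compl) hsub
      ⟨0, left_mem_segment ℝ _ _, h0⟩ ⟨y, right_mem_segment ℝ _ _, hyc⟩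
    exact hw.2.2 (subset_closure (interior_subset hw.2.1))

private lemma sum_single_rpow {n : ℕ} {p : ℝ} (hp : p ≠ 0) (i : Fin n) (a : ℝ) :
    ∑ j, |(Pi.single i a : Fin n → ℝ) j| ^ p = |a| ^ p := by
  rw [Finset.sum_eq_single i]
  · simp
  · intro j _ hj
    simp [Pi.single_apply, hj, Real.zero_rpow hp]
  · simp

/-- For 0 < p ≤ 1, the minimum Lᵖ-distance projection onto the boundary of a convex
set is achieved by a point with exactly one nonzero component. -/
theorem min_Lp_projection_unidimensional {n : ℕ} (S : Set (Fin n → ℝ))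
    (hS : Convex ℝ S) (h0 : (0 : Fin n → ℝ) ∈ interior S)
    (p : ℝ) (hp : 0 < p) (hp1 : p ≤ 1)
    (d : ℝ) (hd : 0 < d)
    (x : Fin n → ℝ) (hx : x ∈ frontier S) (hxd : (∑ i, |x i| ^ p) ^ (1 / p) = d)
    (hmin : ∀ y ∈ frontier S, d ≤ (∑ i, |y i| ^ p) ^ (1 / p)) :
    ∃ z ∈ frontier S, (∃! i, z i ≠ 0) ∧ (∑ i, |z i| ^ p) ^ (1 / p) = d := by
  have hp' : p ≠ 0 := hp.ne'
  have hdp : (0:ℝ) < d ^ p := Real.rpow_pos_of_pos hd p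
  have hsum_nonneg : (0:ℝ) ≤ ∑ i, |x i| ^ p :=
    Finset.sum_nonneg fun i _ => Real.rpow_nonneg (abs_nonneg _) p
  have hsum : ∑ i, |x i| ^ p = d ^ p := by
    have : ((∑ i, |x i| ^ p) ^ (1 / p)) ^ p = d ^ p := by rw [hxd]
    rwa [← Real.rpow_mul hsum_nonneg, one_div_mul_cancel hp', Real.rpow_one] at this
  -- definitions
  set c : Fin n → ℝ := fun i => (d ^ p / |x i| ^ p) * x i with hc
  set v : Fin n → (Fin n → ℝ) := fun i => Pi.single i (c i) with hv
  -- |x i| ≤ d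
  have habs_le : ∀ i, |x i| ≤ d := by
    intro i
    by_contra h
    push_neg at h
    have h1 : d ^ p < |x i| ^ p := Real.rpow_lt_rpow hd.le h hp
    have h2 : |x i| ^ p ≤ ∑ j, |x j| ^ p :=
      Finset.single_le_sum (fun j _ => Real.rpow_nonneg (abs_nonneg _) p) (Finset.mem_univ i)
    rw [hsum] at h2; linarith
  -- |c i| ≤ d  when x i ≠ 0
  have hc_le : ∀ i, x i ≠ 0 → |c i| ≤ d := by
    intro i hxi
    have hxipos : (0:ℝ) < |x i| := abs_pos.mpr hxi
    have hxip : (0:ℝ) < |x i| ^ p := Real.rpow_pos_of_pos hxipos p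
    have : |c i| = d ^ p * |x i| ^ (1 - p) := by
      rw [hc, abs_mul, abs_of_pos (div_pos hdp hxip),
        Real.rpow_sub hxipos, Real.rpow_one]
      field_simp
    rw [this]
    calc d ^ p * |x i| ^ (1 - p) ≤ d ^ p * d ^ (1 - p) := by
          exact mul_le_mul_of_nonneg_left
            (Real.rpow_le_rpow (abs_nonneg _) (habs_le i) (by linarith)) hdp.le
      _ = d := by rw [← Real.rpow_add hd]; norm_num
  by_cases hcase : ∃ i, x i ≠ 0 ∧ v i ∉ interior S
  · -- main case : get boundary point on the axis
    obtain ⟨i, hxi, hvi⟩ := hcase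
    obtain ⟨t, ht0, ht1, htf⟩ := exists_smul_mem_frontier' h0 hvi
    have hxipos : (0:ℝ) < |x i| := abs_pos.mpr hxi
    have hxip : (0:ℝ) < |x i| ^ p := Real.rpow_pos_of_pos hxipos p
    have hci : c i ≠ 0 := mul_ne_zero (ne_of_gt (div_pos hdp hxip)) hxi
    have hzdef : t • v i = Pi.single i (t * c i) := by
      funext j
      by_cases hj : j = i <;> simp [hv, Pi.single_apply, hj]
    have htc : t * c i ≠ 0 := mul_ne_zero ht0.ne' hci
    refine ⟨t • v i, htf, ?_, ?_⟩
    · refine ⟨i, ?_, ?_⟩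
      · rw [hzdef]; simpa using htc
      · intro j hj
        rw [hzdef] at hj
        by_contra hji
        exact hj (by simp [Pi.single_apply, hji])
    · -- norm is exactly d
      have hnorm : (∑ j, |(t • v i) j| ^ p) ^ (1 / p) = |t * c i| := by
        rw [hzdef, sum_single_rpow hp', ← Real.rpow_mul (abs_nonneg _),
          mul_one_div_cancel hp', Real.rpow_one]
      have hle : |t * c i| ≤ d := by
        rw [abs_mul, abs_of_pos ht0]
        calc t * |c i| ≤ 1 * |c i| := by
              exact mul_le_mul_of_nonneg_right ht1 (abs_nonneg _)
          _ = |c i| := one_mul _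
          _ ≤ d := hc_le i hxi
      have hge := hmin _ htf
      rw [hnorm] at hge ⊢
      linarith
  · -- all axis points in the interior : contradiction
    exfalso
    push_neg at hcase
    set g : Fin n → (Fin n → ℝ) := fun i => if x i = 0 then 0 else v i with hg
    have hgint : ∀ i ∈ Finset.univ, g i ∈ interior S := by
      intro i _
      by_cases hxi : x i = 0
      · simpa [hg, hxi] using h0
      · simpa [hg, hxi] using hcase i hxi
    set lam : Fin n → ℝ := fun i => |x i| ^ p / d ^ p with hlam
    have hlam_nonneg : ∀ i ∈ Finset.univ, (0:ℝ) ≤ lam i := fun i _ =>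
      div_nonneg (Real.rpow_nonneg (abs_nonneg _) p) hdp.le
    have hlam_sum : ∑ i, lam i = 1 := by
      rw [hlam, ← Finset.sum_div, hsum, div_self hdp.ne']
    have hxmem : x ∈ interior S := by
      have hcomb : ∑ i, lam i • g i ∈ interior S :=
        hS.interior.sum_mem hlam_nonneg hlam_sum hgint
      have hxeq : x = ∑ i, lam i • g i := by
        funext j
        rw [Finset.sum_apply]
        rw [Finset.sum_eq_single j]
        · by_cases hxj : x j = 0
          · simp [hg, hxj]
          · have hxjp : (0:ℝ) < |x j| ^ p := Real.rpow_pos_of_pos (abs_pos.mpr hxj) p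
            simp only [hg, hv, hxj, if_neg hxj, Pi.smul_apply, Pi.single_eq_same,
              smul_eq_mul, hlam, hc]
            field_simp
        · intro i _ hij
          by_cases hxi : x i = 0
          · simp [hg, hxi]
          · simp [hg, hv, hxi, Pi.single_apply, hij.symm]
        · simp
      rwa [hxeq]
    exact hx.2 hxmem
end

section
/- Let A be an m×n real matrix with no zero row and b ∈ ℝᵐ with all components strictly positive, and let S = {x ∈ ℝⁿ : Ax ≤ b} be bounded. Then the minimum L¹-distance from the origin to the boundary of S equals minᵢ ( bᵢ / maxⱼ |aᵢⱼ| ). -/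
/-- For a bounded polyhedron {x : Ax ≤ b} with no zero row of A and b > 0,
the minimum L¹-distance from the origin to the boundary is
minᵢ (bᵢ / maxⱼ |aᵢⱼ|). -/
theorem min_L1_dist_halfspaces {m n : ℕ} [NeZero m] [NeZero n]
    (A : Matrix (Fin m) (Fin n) ℝ) (b : Fin m → ℝ)
    (hA : ∀ i, ∃ j, A i j ≠ 0) (hb : ∀ i, 0 < b i)
    (hbdd : Bornology.IsBounded {x : Fin n → ℝ | ∀ i, ∑ j, A i j * x j ≤ b i}) :
    IsLeast {r : ℝ | ∃ x ∈ frontier {x : Fin n → ℝ | ∀ i, ∑ j, A i j * x j ≤ b i},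
        r = ∑ j, |x j|}
      (⨅ i, b i / ⨆ j, |A i j|) := by
  set S := {x : Fin n → ℝ | ∀ i, ∑ j, A i j * x j ≤ b i} with hSdef
  set M : Fin m → ℝ := fun i => ⨆ j, |A i j| with hMdef
  have hMle : ∀ i j, |A i j| ≤ M i := fun i j =>
    le_ciSup (f := fun j => |A i j|) (Set.Finite.bddAbove (Set.finite_range _)) j
  have hMpos : ∀ i, 0 < M i := by
    intro i
    obtain ⟨j, hj⟩ := hA i
    exact lt_of_lt_of_le (abs_pos.mpr hj) (hMle i j)
  set r : ℝ := ⨅ i, b i / M i with hrdef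
  have hrle : ∀ i, r ≤ b i / M i := fun i =>
    ciInf_le (f := fun i => b i / M i) (Set.Finite.bddBelow (Set.finite_range _)) i
  have hUopen : IsOpen {x : Fin n → ℝ | ∀ i, ∑ j, A i j * x j < b i} := by
    have heq : {x : Fin n → ℝ | ∀ i, ∑ j, A i j * x j < b i}
        = ⋂ i, {x : Fin n → ℝ | ∑ j, A i j * x j < b i} := by
      ext x; simp
    rw [heq]
    exact isOpen_iInter_of_finite fun i =>
      isOpen_lt (by fun_prop) continuous_const
  have hUsub : {x : Fin n → ℝ | ∀ i, ∑ j, A i j * x j < b i} ⊆ S :=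
    fun x hx i => (hx i).le
  have hUint : {x : Fin n → ℝ | ∀ i, ∑ j, A i j * x j < b i} ⊆ interior S :=
    interior_maximal hUsub hUopen
  constructor
  · -- membership : construct a boundary point at distance r
    obtain ⟨i₀, hi₀⟩ := exists_eq_ciInf_of_finite (f := fun i => b i / M i)
    obtain ⟨j₀, hj₀⟩ := exists_eq_ciSup_of_finite (f := fun j => |A i₀ j|)
    have hc : |A i₀ j₀| = M i₀ := hj₀
    have hcpos : 0 < |A i₀ j₀| := hc ▸ hMpos i₀
    have hcne : A i₀ j₀ ≠ 0 := abs_pos.mp hcpos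
    set s : ℝ := if 0 < A i₀ j₀ then 1 else -1 with hs
    have hsc : s * A i₀ j₀ = |A i₀ j₀| := by
      rcases hcne.lt_or_gt with h | h
      · rw [hs, if_neg (not_lt.mpr h.le), abs_of_neg h]; ring
      · rw [hs, if_pos h, abs_of_pos h]; ring
    have hsabs : |s| = 1 := by
      rcases le_or_gt (A i₀ j₀) 0 with h | h
      · simp [hs, not_lt.mpr h]
      · simp [hs, h]
    have hrpos : 0 < r := by
      rw [hrdef, ← hi₀]
      exact div_pos (hb i₀) (hMpos i₀)
    have hrM : r * M i₀ = b i₀ := by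
      rw [hrdef, ← hi₀]
      exact div_mul_cancel₀ _ (hMpos i₀).ne'
    set x₀ : Fin n → ℝ := fun j => if j = j₀ then r * s else 0 with hx₀
    have hsum : ∀ i, ∑ j, A i j * x₀ j = A i j₀ * (r * s) := by
      intro i
      rw [Finset.sum_eq_single j₀]
      · simp [hx₀]
      · intro j _ hj; simp [hx₀, hj]
      · intro h; exact absurd (Finset.mem_univ j₀) h
    have hx₀S : x₀ ∈ S := by
      intro i
      rw [hsum i]
      calc A i j₀ * (r * s) ≤ |A i j₀ * (r * s)| := le_abs_self _
        _ = |A i j₀| * (r * |s|) := by rw [abs_mul, abs_mul, abs_of_pos hrpos]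
        _ = |A i j₀| * r := by rw [hsabs, mul_one]
        _ ≤ M i * r := by
            apply mul_le_mul_of_nonneg_right (hMle i j₀) hrpos.le
        _ ≤ b i := by
            rw [mul_comm]
            exact (le_div_iff₀ (hMpos i)).mp (hrle i)
    have hx₀ni : x₀ ∉ interior S := by
      intro hint
      obtain ⟨ε, hε, hball⟩ := Metric.mem_nhds_iff.mp (mem_interior_iff_mem_nhds.mp hint)
      set y : Fin n → ℝ := fun j => if j = j₀ then (r + ε/2) * s else 0 with hy
      have hyball : y ∈ Metric.ball x₀ ε := by
        rw [Metric.mem_ball, dist_pi_lt_iff hε]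
        intro j
        by_cases hj : j = j₀
        · subst hj
          have : dist (y j) (x₀ j) = ε/2 := by
            simp only [hy, hx₀, if_pos rfl, Real.dist_eq]
            have : (r + ε/2) * s - r * s = ε/2 * s := by ring
            rw [this, abs_mul, hsabs, mul_one, abs_of_pos (by linarith)]
          rw [this]; linarith
        · simp [hy, hx₀, hj, hε]
      have hyS : y ∈ S := hball hyball
      have := hyS i₀
      have hsumy : ∑ j, A i₀ j * y j = (r + ε/2) * |A i₀ j₀| := by
        rw [Finset.sum_eq_single j₀]
        · have hyj : y j₀ = (r + ε/2) * s := by simp [hy]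
          rw [hyj, show A i₀ j₀ * ((r + ε/2) * s) = (r + ε/2) * (s * A i₀ j₀) by ring, hsc]
        · intro j _ hj; simp [hy, hj]
        · intro h; exact absurd (Finset.mem_univ j₀) h
      rw [hsumy, hc] at this
      have : (r + ε/2) * M i₀ ≤ r * M i₀ := by rw [hrM]; exact this
      nlinarith [hMpos i₀]
    refine ⟨x₀, ⟨subset_closure hx₀S, hx₀ni⟩, ?_⟩
    rw [Finset.sum_eq_single j₀]
    · simp only [hx₀, if_pos rfl, abs_mul, hsabs, mul_one, abs_of_pos hrpos]
    · intro j _ hj; simp [hx₀, hj]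
    · intro h; exact absurd (Finset.mem_univ j₀) h
  · -- lower bound
    rintro ρ ⟨x, hx, rfl⟩
    by_contra h
    push_neg at h
    have hxint : x ∈ interior S := by
      apply hUint
      intro i
      calc ∑ j, A i j * x j ≤ ∑ j, |A i j| * |x j| := by
            apply Finset.sum_le_sum
            intro j _
            rw [← abs_mul]
            exact le_abs_self _
        _ ≤ ∑ j, M i * |x j| := by
            apply Finset.sum_le_sum
            intro j _
            exact mul_le_mul_of_nonneg_right (hMle i j) (abs_nonneg _)
        _ = M i * ∑ j, |x j| := by rw [Finset.mul_sum]
        _ < M i * r := by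
            exact mul_lt_mul_of_pos_left h (hMpos i)
        _ ≤ b i := by
            rw [mul_comm]
            exact (le_div_iff₀ (hMpos i)).mp (hrle i)
    exact hx.2 hxint
end

section
/- Let S ⊆ ℝⁿ be a convex hull of finitely many points a₁,…,a_m together with scaling by factors ≤ 1 from the origin, i.e., S = {Σₖ μₖ aₖ : μₖ ≥ 0, Σₖ μₖ ≤ 1}, and suppose 0 ∈ interior S. Then S equals the convex hull of {0, a₁, …, a_m}, and the minimum L¹-distance from 0 to ∂S (attained) equals minⱼ min{λⱼ⁻, λⱼ⁺}, where λⱼ⁺ = max{λ : λeⱼ ∈ S} and λⱼ⁻ = max{λ : -λeⱼ ∈ S}. -/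
/-!
`S` is the convex hull of the finite set `{0, a₁, …, a_m}`, hence convex and compact.
For `u ≠ 0`, the point `λ u` with `λ = sup {l | l u ∈ S}` lies on `∂S`; for `u = ±eⱼ` its
`ℓ¹`-norm is `λⱼ±`, so the minimum is attained. Conversely, if `‖x‖₁ < c := minⱼ min λⱼ±`,
let `dⱼ = ±eⱼ` carry the sign of `xⱼ`; then `x = ∑ⱼ (|xⱼ| / λ(dⱼ)) • (λ(dⱼ) dⱼ)` is a combination
of points of `S` with total weight `< 1`, which lies in the interior because `0 ∈ int S`.
-/

open Set Bornology Pointwise Filter Topology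

section Convex

variable {ι E : Type*} [Fintype ι] [AddCommGroup E] [Module ℝ E] {s : Set E}
  {w : ι → ℝ} {v : ι → E}

theorem Convex.sum_smul_mem_sum_smul (hs : Convex ℝ s) (h0 : (0 : E) ∈ s)
    (hw : ∀ i, 0 ≤ w i) (hv : ∀ i, v i ∈ s) : ∑ i, w i • v i ∈ (∑ i, w i) • s := by
  rcases (Finset.sum_nonneg fun i _ => hw i).eq_or_lt with hsum | hsum
  · have hw0 : ∀ i, w i = 0 := fun i =>
      (Finset.sum_eq_zero_iff_of_nonneg fun i _ => hw i).mp hsum.symm i (Finset.mem_univ i)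
    exact ⟨0, h0, by simp [hw0]⟩
  · refine ⟨Finset.univ.centerMass w v,
      hs.centerMass_mem (fun i _ => hw i) hsum fun i _ => hv i, ?_⟩
    simp only [Finset.centerMass, smul_inv_smul₀ hsum.ne']

theorem Convex.sum_smul_mem_of_zero_mem (hs : Convex ℝ s) (h0 : (0 : E) ∈ s)
    (hw : ∀ i, 0 ≤ w i) (hw1 : ∑ i, w i ≤ 1) (hv : ∀ i, v i ∈ s) : ∑ i, w i • v i ∈ s := by
  obtain ⟨y, hy, hxy⟩ := hs.sum_smul_mem_sum_smul h0 hw hv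
  exact hxy ▸ hs.smul_mem_of_zero_mem h0 hy ⟨Finset.sum_nonneg fun i _ => hw i, hw1⟩

theorem Convex.sum_smul_mem_interior [TopologicalSpace E] [IsTopologicalAddGroup E]
    [ContinuousConstSMul ℝ E] (hs : Convex ℝ s) (h0 : (0 : E) ∈ interior s)
    (hw : ∀ i, 0 ≤ w i) (hw1 : ∑ i, w i < 1) (hv : ∀ i, v i ∈ s) :
    ∑ i, w i • v i ∈ interior s := by
  obtain ⟨y, hy, hxy⟩ := hs.sum_smul_mem_sum_smul (interior_subset h0) hw hv
  simpa [← hxy] using hs.combo_interior_self_mem_interior h0 hy (sub_pos.mpr hw1)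
    (Finset.sum_nonneg fun i _ => hw i) (sub_add_cancel 1 _)

theorem setOf_sum_smul_le_one_eq_convexHull (a : ι → E) :
    {x | ∃ μ : ι → ℝ, (∀ k, 0 ≤ μ k) ∧ ∑ k, μ k ≤ 1 ∧ x = ∑ k, μ k • a k} =
      convexHull ℝ ({0} ∪ range a) := by
  classical
  refine Subset.antisymm ?_ (convexHull_min ?_ ?_)
  · rintro _ ⟨μ, hμ, hμ1, rfl⟩
    exact (convex_convexHull ℝ _).sum_smul_mem_of_zero_mem (subset_convexHull ℝ _ (by simp))
      hμ hμ1 fun k => subset_convexHull ℝ _ (Or.inr (mem_range_self k))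
  · rintro _ (rfl | ⟨k, rfl⟩)
    · exact ⟨0, fun _ => le_rfl, by simp, by simp⟩
    · exact ⟨Pi.single k 1, (Pi.single_nonneg.mpr zero_le_one : (0 : ι → ℝ) ≤ _), by simp,
        by simp [Pi.single_apply]⟩
  · rintro _ ⟨μ, hμ, hμ1, rfl⟩ _ ⟨ν, hν, hν1, rfl⟩ s t hs ht hst
    refine ⟨s • μ + t • ν, fun k =>
      add_nonneg (mul_nonneg hs (hμ k)) (mul_nonneg ht (hν k)), ?_, ?_⟩
    · simp only [Pi.add_apply, Pi.smul_apply, smul_eq_mul, Finset.sum_add_distrib,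
        ← Finset.mul_sum]
      nlinarith
    · simp only [Pi.add_apply, Pi.smul_apply, smul_eq_mul, add_smul, mul_smul,
        Finset.sum_add_distrib, Finset.smul_sum]

end Convex

section Ray

variable {E : Type*} [NormedAddCommGroup E] [NormedSpace ℝ E] {S : Set E} {u : E}

noncomputable def rayRadius (S : Set E) (u : E) : ℝ := sSup {l : ℝ | l • u ∈ S}

theorem bddAbove_setOf_smul_mem (hS : IsBounded S) (hu : u ≠ 0) :
    BddAbove {l : ℝ | l • u ∈ S} := by
  obtain ⟨R, hR⟩ := hS.subset_closedBall 0
  refine ⟨R / ‖u‖, fun l hl => ?_⟩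
  have := hR hl
  rw [Metric.mem_closedBall, dist_zero_right, norm_smul, Real.norm_eq_abs] at this
  rw [le_div_iff₀ (norm_pos_iff.mpr hu)]
  exact (mul_le_mul_of_nonneg_right (le_abs_self l) (norm_nonneg u)).trans this

theorem exists_gt_smul_mem_of_smul_mem_interior {r : ℝ} (h : r • u ∈ interior S) :
    ∃ l > r, l • u ∈ S := by
  have : ∀ᶠ l in 𝓝 r, l • u ∈ interior S :=
    (continuous_id.smul continuous_const).continuousAt.preimage_mem_nhds
      (isOpen_interior.mem_nhds h)
  obtain ⟨l, hl, hlr⟩ :=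
    ((this.filter_mono nhdsWithin_le_nhds).and self_mem_nhdsWithin).exists (f := 𝓝[>] r)
  exact ⟨l, hlr, interior_subset hl⟩

theorem rayRadius_pos (hS : IsBounded S) (h0 : (0 : E) ∈ interior S) (hu : u ≠ 0) :
    0 < rayRadius S u := by
  obtain ⟨l, hl, hlS⟩ :=
    exists_gt_smul_mem_of_smul_mem_interior (u := u) (r := 0) (by simpa using h0)
  exact hl.trans_le (le_csSup (bddAbove_setOf_smul_mem hS hu) hlS)

theorem rayRadius_smul_mem_frontier (hcl : IsClosed S) (hS : IsBounded S)
    (h0 : (0 : E) ∈ interior S) (hu : u ≠ 0) : rayRadius S u • u ∈ frontier S := by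
  have hbdd := bddAbove_setOf_smul_mem hS hu
  have hmem : rayRadius S u ∈ {l : ℝ | l • u ∈ S} :=
    (hcl.preimage (continuous_id.smul continuous_const)).csSup_mem
      ⟨0, by simpa using interior_subset h0⟩ hbdd
  refine hcl.frontier_eq ▸ ⟨hmem, fun hint => ?_⟩
  obtain ⟨l, hl, hlS⟩ := exists_gt_smul_mem_of_smul_mem_interior hint
  exact hl.not_ge (le_csSup hbdd hlS)

end Ray

section L1

variable {ι : Type*} [Fintype ι] {S : Set (ι → ℝ)}

theorem exists_mem_frontier_rayRadius_eq_sum_abs (hcl : IsClosed S) (hS : IsBounded S)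
    (h0 : (0 : ι → ℝ) ∈ interior S) {u : ι → ℝ} (hu : ∑ i, |u i| = 1) :
    ∃ x ∈ frontier S, rayRadius S u = ∑ i, |x i| := by
  have hu0 : u ≠ 0 := by rintro rfl; simp at hu
  refine ⟨rayRadius S u • u, rayRadius_smul_mem_frontier hcl hS h0 hu0, ?_⟩
  simp only [Pi.smul_apply, smul_eq_mul, abs_mul, ← Finset.mul_sum, hu, mul_one,
    abs_of_pos (rayRadius_pos hS h0 hu0)]

variable [DecidableEq ι]

theorem sum_abs_smul_signed_single (x : ι → ℝ) :
    ∑ j, |x j| • (if 0 ≤ x j then Pi.single j 1 else -Pi.single j 1 : ι → ℝ) = x := by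
  conv_rhs => rw [← Finset.univ_sum_single x]
  refine Finset.sum_congr rfl fun j _ => ?_
  split_ifs with h
  · simp [abs_of_nonneg h, ← Pi.single_smul]
  · simp [abs_of_neg (not_le.mp h), ← Pi.single_smul]

theorem mem_interior_of_sum_abs_lt (hconv : Convex ℝ S) (hcl : IsClosed S) (hS : IsBounded S)
    (h0 : (0 : ι → ℝ) ∈ interior S) {c : ℝ}
    (hc : ∀ j, c ≤ min (rayRadius S (-Pi.single j 1)) (rayRadius S (Pi.single j 1)))
    {x : ι → ℝ} (hx : ∑ i, |x i| < c) : x ∈ interior S := by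
  set d : ι → ι → ℝ := fun j => if 0 ≤ x j then Pi.single j 1 else -Pi.single j 1
  have hd : ∀ j, d j ≠ 0 := fun j => by
    by_cases h : 0 ≤ x j <;> simp [d, h]
  have hcd : ∀ j, c ≤ rayRadius S (d j) := fun j => by
    by_cases h : 0 ≤ x j
    · simpa [d, h] using (hc j).trans (min_le_right _ _)
    · simpa [d, h] using (hc j).trans (min_le_left _ _)
  have hc0 : 0 < c := (Finset.sum_nonneg fun i _ => abs_nonneg (x i)).trans_lt hx
  have hpos : ∀ j, 0 < rayRadius S (d j) := fun j => rayRadius_pos hS h0 (hd j)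
  have hx_eq : ∑ j, (|x j| / rayRadius S (d j)) • (rayRadius S (d j) • d j) = x := by
    simp only [smul_smul, div_mul_cancel₀ _ (hpos _).ne']
    exact sum_abs_smul_signed_single x
  rw [← hx_eq]
  refine hconv.sum_smul_mem_interior h0 (fun j => div_nonneg (abs_nonneg _) (hpos j).le) ?_
    fun j => hcl.frontier_subset (rayRadius_smul_mem_frontier hcl hS h0 (hd j))
  calc ∑ j, |x j| / rayRadius S (d j) ≤ ∑ j, |x j| / c :=
        Finset.sum_le_sum fun j _ => div_le_div_of_nonneg_left (abs_nonneg _) hc0 (hcd j)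
    _ = (∑ j, |x j|) / c := (Finset.sum_div ..).symm
    _ < 1 := (div_lt_one hc0).mpr hx

theorem isLeast_sum_abs_frontier [Nonempty ι] (hconv : Convex ℝ S) (hcl : IsClosed S)
    (hS : IsBounded S) (h0 : (0 : ι → ℝ) ∈ interior S) :
    IsLeast {r | ∃ x ∈ frontier S, r = ∑ i, |x i|}
      (⨅ j, min (rayRadius S (-Pi.single j 1)) (rayRadius S (Pi.single j 1))) := by
  set f : ι → ℝ := fun j => min (rayRadius S (-Pi.single j 1)) (rayRadius S (Pi.single j 1))
  have hle : ∀ j, ⨅ i, f i ≤ f j := ciInf_le (Finite.bddBelow_range f)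
  constructor
  · obtain ⟨j, hj⟩ := Finite.exists_min f
    rw [le_antisymm (hle j) (le_ciInf hj)]
    rcases min_choice (rayRadius S (-Pi.single j 1)) (rayRadius S (Pi.single j 1)) with h | h <;>
      refine (show f j = _ from h) ▸ exists_mem_frontier_rayRadius_eq_sum_abs hcl hS h0 ?_ <;>
      simp [Pi.single_apply, apply_ite abs]
  · rintro _ ⟨x, hx, rfl⟩
    by_contra! hlt
    exact (hcl.frontier_eq ▸ hx).2 (mem_interior_of_sum_abs_lt hconv hcl hS h0 hle hlt)

end L1

/-- For the polyhedron S = {Σ μₖaₖ : μ ≥ 0, Σμₖ ≤ 1} with 0 interior: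
S is the convex hull of {0, a₁, …, a_m}, and the minimum L¹-distance from 0
to ∂S equals minⱼ min{λⱼ⁻, λⱼ⁺} with λⱼ± = max{λ : ±λeⱼ ∈ S}. -/
theorem min_L1_dist_convex_hull {n m : ℕ} [NeZero n]
    (a : Fin m → (Fin n → ℝ)) (S : Set (Fin n → ℝ))
    (hSdef : S = {x | ∃ μ : Fin m → ℝ,
        (∀ k, 0 ≤ μ k) ∧ (∑ k, μ k) ≤ 1 ∧ x = ∑ k, μ k • a k})
    (h0 : (0 : Fin n → ℝ) ∈ interior S) :
    S = convexHull ℝ ({0} ∪ Set.range a) ∧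
    IsLeast {r : ℝ | ∃ x ∈ frontier S, r = ∑ i, |x i|}
      (⨅ j : Fin n,
        min (sSup {l : ℝ | (-l) • (Pi.single j 1 : Fin n → ℝ) ∈ S})
            (sSup {l : ℝ | l • (Pi.single j 1 : Fin n → ℝ) ∈ S})) := by
  have hS : S = convexHull ℝ ({0} ∪ range a) :=
    hSdef.trans (setOf_sum_smul_le_one_eq_convexHull a)
  have hcpt : IsCompact S :=
    hS ▸ ((finite_singleton 0).union (finite_range a)).isCompact_convexHull (𝕜 := ℝ)
  refine ⟨hS, ?_⟩
  simpa only [rayRadius, smul_neg, neg_smul] using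
    isLeast_sum_abs_frontier (hS ▸ convex_convexHull ℝ _) hcpt.isClosed hcpt.isBounded h0
end

section
/- Let S be a compact convex set in ℝⁿ with 0 in its interior. For each j, define λⱼ⁺ = max{λ ≥ 0 : λeⱼ ∈ S} and λⱼ⁻ = max{λ ≥ 0 : -λeⱼ ∈ S}. Then the minimum L¹-distance from the origin to the boundary of S equals minⱼ min{λⱼ⁻, λⱼ⁺}. -/
open Set

variable {n : ℕ}

private lemma Tclosed (S : Set (Fin n → ℝ)) (hScl : IsClosed S) (v : Fin n → ℝ) :
    IsClosed {l : ℝ | 0 ≤ l ∧ l • v ∈ S} := by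
  have h : {l : ℝ | 0 ≤ l ∧ l • v ∈ S} = Set.Ici 0 ∩ (fun l : ℝ => l • v) ⁻¹' S := by
    ext l; simp [Set.mem_Ici]
  rw [h]
  exact isClosed_Ici.inter (hScl.preimage (continuous_id.smul continuous_const))

private lemma Tbdd (S : Set (Fin n → ℝ)) (hScpt : IsCompact S) (v : Fin n → ℝ)
    (j : Fin n) (hv : |v j| = 1) : BddAbove {l : ℝ | 0 ≤ l ∧ l • v ∈ S} := by
  obtain ⟨R, hR⟩ := isBounded_iff_forall_norm_le.mp hScpt.isBounded
  refine ⟨R, fun l hl => ?_⟩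
  have h1 : |l| * |v j| ≤ ‖l • v‖ := by
    simpa [Real.norm_eq_abs] using norm_le_pi_norm (l • v) j
  calc l = |l| * |v j| := by rw [hv, mul_one, abs_of_nonneg hl.1]
    _ ≤ ‖l • v‖ := h1
    _ ≤ R := hR _ hl.2

private lemma sSup_smul_frontier (S : Set (Fin n → ℝ)) (hS : Convex ℝ S)
    (hScpt : IsCompact S) (h0 : (0 : Fin n → ℝ) ∈ interior S)
    (v : Fin n → ℝ) (j : Fin n) (hv : |v j| = 1) :
    0 ≤ sSup {l : ℝ | 0 ≤ l ∧ l • v ∈ S} ∧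
    sSup {l : ℝ | 0 ≤ l ∧ l • v ∈ S} • v ∈ frontier S ∧
    ∀ r : ℝ, 0 ≤ r → r < sSup {l : ℝ | 0 ≤ l ∧ l • v ∈ S} → r • v ∈ interior S := by
  set T := {l : ℝ | 0 ≤ l ∧ l • v ∈ S} with hT
  have h0S : (0 : Fin n → ℝ) ∈ S := interior_subset h0
  have hne : (0:ℝ) ∈ T := ⟨le_refl 0, by simpa using h0S⟩
  have hbdd := Tbdd S hScpt v j hv
  have hcl := Tclosed S hScpt.isClosed v
  have hmem : sSup T ∈ T := hcl.csSup_mem ⟨0, hne⟩ hbdd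
  have hpos0 : 0 ≤ sSup T := hmem.1
  have hint : ∀ r : ℝ, 0 ≤ r → r < sSup T → r • v ∈ interior S := by
    intro r hr hrs
    have hc : 0 < sSup T := lt_of_le_of_lt hr hrs
    have hb : 0 ≤ r / sSup T := div_nonneg hr hc.le
    have hb1 : r / sSup T < 1 := (div_lt_one hc).mpr hrs
    have hcomb := hS.combo_interior_closure_mem_interior h0 (subset_closure hmem.2)
      (by linarith : (0:ℝ) < 1 - r / sSup T) hb (by ring)
    simpa [smul_smul, div_mul_cancel₀ r hc.ne'] using hcomb
  refine ⟨hpos0, ?_, hint⟩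
  rw [hScpt.isClosed.frontier_eq]
  refine ⟨hmem.2, fun hin => ?_⟩
  obtain ⟨δ, hδ, hball⟩ := Metric.isOpen_iff.mp isOpen_interior _ hin
  set ε := δ / (2 * (‖v‖ + 1)) with hε
  have hεpos : 0 < ε := by positivity
  have hmem' : sSup T + ε ∈ T := by
    refine ⟨by linarith, interior_subset (hball ?_)⟩
    rw [Metric.mem_ball, dist_eq_norm]
    have hdiff : (sSup T + ε) • v - sSup T • v = ε • v := by module
    rw [hdiff, norm_smul, Real.norm_eq_abs, abs_of_pos hεpos]
    have hv1 : 0 ≤ ‖v‖ := norm_nonneg v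
    calc ε * ‖v‖ = δ * (‖v‖ / (2 * (‖v‖+1))) := by rw [hε]; ring
      _ < δ := by
          have hlt1 : ‖v‖ / (2 * (‖v‖+1)) < 1 := by
            rw [div_lt_one (by positivity)]; linarith
          nlinarith
  have := le_csSup hbdd hmem'
  linarith

private lemma myAbsMulSign (a : ℝ) : |a| * Real.sign a = a := by
  rcases lt_trichotomy a 0 with h|h|h
  · rw [Real.sign_of_neg h, abs_of_neg h]; ring
  · simp [h]
  · rw [Real.sign_of_pos h, abs_of_pos h]; ring

private lemma sum_abs_smul_single (j : Fin n) (c : ℝ) :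
    (∑ i, |(c • (Pi.single j 1 : Fin n → ℝ)) i|) = |c| := by
  have h : ∀ i, |(c • (Pi.single j 1 : Fin n → ℝ)) i| = if i = j then |c| else 0 := by
    intro i
    by_cases h : i = j <;> simp [h, Pi.single_apply, abs_mul]
  calc (∑ i, |(c • (Pi.single j 1 : Fin n → ℝ)) i|)
      = ∑ i, if i = j then |c| else 0 := Finset.sum_congr rfl fun i _ => h i
    _ = |c| := by simp

private lemma sum_abs_smul_single_neg (j : Fin n) (c : ℝ) :
    (∑ i, |(c • (-(Pi.single j 1 : Fin n → ℝ))) i|) = |c| := by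
  have h : ∀ i, |(c • (-(Pi.single j 1 : Fin n → ℝ))) i| = if i = j then |c| else 0 := by
    intro i
    by_cases h : i = j <;> simp [h, Pi.single_apply, abs_mul]
  calc (∑ i, |(c • (-(Pi.single j 1 : Fin n → ℝ))) i|)
      = ∑ i, if i = j then |c| else 0 := Finset.sum_congr rfl fun i _ => h i
    _ = |c| := by simp

/-- For a compact convex S with 0 interior, the minimum L¹-distance from the
origin to ∂S equals minⱼ min{λⱼ⁻, λⱼ⁺}, where λⱼ± = max{λ ≥ 0 : ±λeⱼ ∈ S}. -/
theorem min_L1_dist_compact_convex {n : ℕ} [NeZero n]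
    (S : Set (Fin n → ℝ)) (hS : Convex ℝ S) (hScpt : IsCompact S)
    (h0 : (0 : Fin n → ℝ) ∈ interior S) :
    IsLeast {r : ℝ | ∃ x ∈ frontier S, r = ∑ i, |x i|}
      (⨅ j : Fin n,
        min (sSup {l : ℝ | 0 ≤ l ∧ (-l) • (Pi.single j 1 : Fin n → ℝ) ∈ S})
            (sSup {l : ℝ | 0 ≤ l ∧ l • (Pi.single j 1 : Fin n → ℝ) ∈ S})) := by
  have hnegSet : ∀ j : Fin n,
      {l : ℝ | 0 ≤ l ∧ (-l) • (Pi.single j 1 : Fin n → ℝ) ∈ S}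
        = {l : ℝ | 0 ≤ l ∧ l • (-(Pi.single j 1 : Fin n → ℝ)) ∈ S} := by
    intro j; ext l; simp [neg_smul, smul_neg]
  have keyP : ∀ j : Fin n, _ := fun j =>
    sSup_smul_frontier S hS hScpt h0 (Pi.single j 1) j (by simp)
  have keyM : ∀ j : Fin n, _ := fun j =>
    sSup_smul_frontier S hS hScpt h0 (-(Pi.single j 1)) j (by simp)
  set f : Fin n → ℝ := fun j =>
    min (sSup {l : ℝ | 0 ≤ l ∧ (-l) • (Pi.single j 1 : Fin n → ℝ) ∈ S})
        (sSup {l : ℝ | 0 ≤ l ∧ l • (Pi.single j 1 : Fin n → ℝ) ∈ S}) with hf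
  have hbddf : BddBelow (Set.range f) := (Set.finite_range f).bddBelow
  have hfrontier_not_int : ∀ x ∈ frontier S, x ∉ interior S := by
    intro x hx
    rw [hScpt.isClosed.frontier_eq] at hx
    exact hx.2
  constructor
  · -- membership
    obtain ⟨j0, hj0⟩ := Finite.exists_min f
    have hinf : (⨅ j, f j) = f j0 :=
      le_antisymm (ciInf_le hbddf j0) (le_ciInf hj0)
    rw [hinf, hf]
    simp only
    rcases min_cases (sSup {l : ℝ | 0 ≤ l ∧ (-l) • (Pi.single j0 1 : Fin n → ℝ) ∈ S})
        (sSup {l : ℝ | 0 ≤ l ∧ l • (Pi.single j0 1 : Fin n → ℝ) ∈ S}) with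
        ⟨hmin, _⟩ | ⟨hmin, _⟩
    · rw [hmin, hnegSet j0]
      refine ⟨sSup {l : ℝ | 0 ≤ l ∧ l • (-(Pi.single j0 1 : Fin n → ℝ)) ∈ S}
          • (-(Pi.single j0 1 : Fin n → ℝ)), (keyM j0).2.1, ?_⟩
      rw [sum_abs_smul_single_neg, abs_of_nonneg (keyM j0).1]
    · rw [hmin]
      refine ⟨sSup {l : ℝ | 0 ≤ l ∧ l • (Pi.single j0 1 : Fin n → ℝ) ∈ S}
          • (Pi.single j0 1 : Fin n → ℝ), (keyP j0).2.1, ?_⟩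
      rw [sum_abs_smul_single, abs_of_nonneg (keyP j0).1]
  · -- lower bound
    rintro r ⟨x, hx, rfl⟩
    by_contra hcon
    push_neg at hcon
    have hr0 : 0 ≤ ∑ i, |x i| := Finset.sum_nonneg fun i _ => abs_nonneg _
    have hlt : ∀ j, ∑ i, |x i| < f j := fun j =>
      lt_of_lt_of_le hcon (ciInf_le hbddf j)
    have hltM : ∀ j, ∑ i, |x i|
        < sSup {l : ℝ | 0 ≤ l ∧ l • (-(Pi.single j 1 : Fin n → ℝ)) ∈ S} := by
      intro j
      have := lt_of_lt_of_le (hlt j) (min_le_left _ _)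
      rwa [hnegSet j] at this
    have hltP : ∀ j, ∑ i, |x i|
        < sSup {l : ℝ | 0 ≤ l ∧ l • (Pi.single j 1 : Fin n → ℝ) ∈ S} :=
      fun j => lt_of_lt_of_le (hlt j) (min_le_right _ _)
    rcases eq_or_lt_of_le hr0 with h0r | h0r
    · -- sum is zero, so x = 0 ∈ interior S, contradiction
      have hx0 : x = 0 := by
        funext i
        have := (Finset.sum_eq_zero_iff_of_nonneg
          (fun i _ => abs_nonneg (x i))).mp h0r.symm i (Finset.mem_univ i)
        simpa [abs_eq_zero] using this
      exact hfrontier_not_int x hx (hx0 ▸ h0)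
    · set r := ∑ i, |x i| with hr
      set y : Fin n → (Fin n → ℝ) :=
        fun i => (r * Real.sign (x i)) • (Pi.single i 1 : Fin n → ℝ) with hy
      have hyint : ∀ i, y i ∈ interior S := by
        intro i
        rcases lt_trichotomy (x i) 0 with h | h | h
        · have heq : y i = r • (-(Pi.single i 1 : Fin n → ℝ)) := by
            simp only [hy, Real.sign_of_neg h, mul_neg_one, neg_smul, smul_neg]
          rw [heq]
          exact (keyM i).2.2 r h0r.le (hltM i)
        · have heq : y i = 0 := by rw [hy]; simp [h]
          rw [heq]; exact h0
        · have heq : y i = r • (Pi.single i 1 : Fin n → ℝ) := by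
            simp only [hy, Real.sign_of_pos h, mul_one]
          rw [heq]
          exact (keyP i).2.2 r h0r.le (hltP i)
      have hxeq : x = ∑ i, (|x i| / r) • y i := by
        funext k
        rw [Finset.sum_apply]
        have hterm : ∀ i, ((|x i| / r) • y i) k
            = if k = i then (|x i| / r) * (r * Real.sign (x i)) else 0 := by
          intro i
          by_cases h : k = i <;>
            simp [hy, h, Pi.single_apply, mul_comm]
        rw [Finset.sum_congr rfl fun i _ => hterm i]
        rw [Finset.sum_ite_eq (Finset.univ : Finset (Fin n)) k
          (fun i => (|x i| / r) * (r * Real.sign (x i)))]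
        simp only [Finset.mem_univ, if_true]
        have h1 : |x k| / r * (r * Real.sign (x k)) = |x k| * Real.sign (x k) := by
          field_simp
        rw [h1]
        exact (myAbsMulSign (x k)).symm
      have hwsum : (∑ i, |x i| / r) = 1 := by
        rw [← Finset.sum_div, ← hr, div_self h0r.ne']
      have hxint : x ∈ interior S := by
        rw [hxeq]
        exact (hS.interior).sum_mem (fun i _ => div_nonneg (abs_nonneg _) h0r.le)
          hwsum (fun i _ => hyint i)
      exact hfrontier_not_int x hx hxint
end
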